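/- Define, for Ω ∈ (−1, 0], the branches ω⁺(Ω) := πΩ/2 + arccos(−(Ω+1)·sin(πΩ/2)) and, on the domain where (Ω+3)·|sin(πΩ/2)| ≤ 1, ω⁻(Ω) := πΩ/2 − arccos(−(Ω+3)·sin(πΩ/2)). Then: (i) there exist ε₀ > 0 and a unique continuous function Ω⁺ : (0, ε₀) → (−1, 0] satisfying Ω⁺(ε) = ε·(ω⁺(Ω⁺(ε)) − 3π/2) for all ε ∈ (0, ε₀), and the associated control value B₀₁⁺(ε) := −sin²(π·Ω⁺(ε)/2)/cos(ω⁺(Ω⁺(ε))) satisfies B₀₁⁺(ε) = −(π/2)²·ε − 3·(π/2)³·ε² + o(ε²) as ε → 0⁺; (ii) there exist ε₀ > 0 and a unique continuous function Ω⁻ : (0, ε₀) → (−1, 0] satisfying Ω⁻(ε) = ε·(ω⁻(Ω⁻(ε)) − π/2) for all ε ∈ (0, ε₀), and the associated control value B₁₁⁻(ε) := −sin²(π·Ω⁻(ε)/2)/cos(ω⁻(Ω⁻(ε))) satisfies B₁₁⁻(ε) = −(π/2)²·ε + (π/2)³·ε² + o(ε²) as ε → 0⁺. In particular B₀₁⁺(ε)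 < B₁₁⁻(ε) < 0 for all sufficiently small ε > 0. -/

import Mathlib

open Real Filter Asymptotics

/-- The branch `ω⁺(Ω) = πΩ/2 + arccos(-(Ω+1) sin(πΩ/2))` (case `m = 0`). -/
noncomputable def omegaPlus (Ω : ℝ) : ℝ :=
  π*Ω/2 + Real.arccos (-(Ω+1) * Real.sin (π*Ω/2))

/-- The branch `ω⁻(Ω) = πΩ/2 - arccos(-(Ω+3) sin(πΩ/2))` (case `m = 1`). -/
noncomputable def omegaMinus (Ω : ℝ) : ℝ :=
  π*Ω/2 - Real.arccos (-(Ω+3) * Real.sin (π*Ω/2))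

/-- The scaled control value `B = -sin²(πΩ/2)/cos(ω)` at frequency `Ω` on branch `ω`. -/
noncomputable def Bval (ω : ℝ → ℝ) (Ω : ℝ) : ℝ :=
  -(Real.sin (π*Ω/2))^2 / Real.cos (ω Ω)

/-!
On either branch the phase `θ = s (ω Ω - c + π)`, with `s = 1` for `ω⁺` and `s = -1` for `ω⁻`,
is `πΩ + πΩ²/2 + O(Ω³)` by the cubic Taylor bounds for `sin` and `arcsin`, and `cos ω = -sin θ`.
Since `ω` is `12`-Lipschitz near `0`, the hashing relation `Ω = ε (ω Ω - c)` is a contraction for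
`ε < 1/100`: it has exactly one solution in `(-1, 0]` (found by the intermediate value theorem in
`[-2πε, -πε/2]`), and this solution is Lipschitz in `ε`. Substituting the phase expansion twice
gives `Ω = -πε - sπ²ε² + O(ε³)`, while `B = sin²(πΩ/2) / sin θ = πΩ/4 - πΩ²/8 + O(Ω³)`; together
`B = -(π/2)²ε - (2s + 1)(π/2)³ε² + O(ε³)`, and the two boundaries are ordered by their `ε²`
coefficients `-3(π/2)³ < (π/2)³`.
-/

open Set Topology

lemma abs_arcsin_sub_arcsin_le {a b : ℝ} (ha : |a| ≤ 1/2) (hb : |b| ≤ 1/2) :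
    |arcsin a - arcsin b| ≤ 2 * |a - b| := by
  set I : Set ℝ := Icc (-(1/2)) (1/2)
  have hderiv : ∀ x ∈ I, HasDerivWithinAt arcsin (1 / √(1 - x^2)) I x := fun x hx =>
    (hasDerivAt_arcsin (by linarith [hx.1]) (by linarith [hx.2])).hasDerivWithinAt
  have hbound : ∀ x ∈ I, ‖1 / √(1 - x^2)‖ ≤ 2 := by
    intro x hx
    have hx2 : x^2 ≤ 1/4 := by nlinarith [hx.1, hx.2]
    have hsqrt : 1/2 ≤ √(1 - x^2) := Real.le_sqrt_of_sq_le (by linarith)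
    rw [Real.norm_eq_abs, abs_of_pos (by positivity)]
    rw [div_le_iff₀ (by linarith)]; linarith
  simpa only [Real.norm_eq_abs] using
    (convex_Icc _ _).norm_image_sub_le_of_norm_hasDerivWithin_le hderiv hbound
      (abs_le.1 hb) (abs_le.1 ha)

lemma abs_arcsin_sub_self_le {v : ℝ} (hv : |v| ≤ 1/2) : |arcsin v - v| ≤ |v|^3 / 3 := by
  set θ := arcsin v
  have hsin : sin θ = v := sin_arcsin (by linarith [abs_le.1 hv]) (by linarith [abs_le.1 hv])
  have hθv : |θ| ≤ 2 * |v| := by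
    simpa [θ] using abs_arcsin_sub_arcsin_le hv (b := 0) (by norm_num)
  have hθ1 : |θ| ≤ 1 := by linarith
  have hcube := Real.abs_sub_sin_le θ
  rw [hsin] at hcube
  -- `|v| ≥ |θ| - |θ|³/6 ≥ 5|θ|/6`
  have hθv' : |θ| ≤ 6/5 * |v| := by
    have := abs_sub_abs_le_abs_sub θ v
    linarith [pow_le_of_le_one (abs_nonneg θ) hθ1 (by norm_num : 3 ≠ 0)]
  calc |θ - v| ≤ |θ|^3 / 6 := hcube
    _ ≤ (6/5 * |v|)^3 / 6 := by gcongr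
    _ ≤ |v|^3 / 3 := by nlinarith [pow_nonneg (abs_nonneg v) 3]

section PhaseArgument

variable {k : ℝ}

lemma abs_pi_mul_div_two_le (x : ℝ) : |π * x / 2| ≤ 8/5 * |x| := by
  rw [show π * x / 2 = π / 2 * x by ring, abs_mul, abs_of_pos (by positivity)]
  exact mul_le_mul_of_nonneg_right (by linarith [pi_lt_d2]) (abs_nonneg x)

lemma abs_neg_add_mul_sin_le (hk : k ∈ Icc 1 3) {Ω : ℝ} (hΩ : Ω ∈ Icc (-(7/100)) 0) :
    |-(Ω + k) * sin (π * Ω / 2)| ≤ 5 * |Ω| := by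
  have hΩk : |Ω + k| ≤ 3 := abs_le.2 ⟨by linarith [hk.1, hΩ.1], by linarith [hk.2, hΩ.2]⟩
  have hsin : |sin (π * Ω / 2)| ≤ 8/5 * |Ω| := abs_sin_le_abs.trans (abs_pi_mul_div_two_le Ω)
  rw [abs_mul, abs_neg]
  nlinarith [abs_nonneg (Ω + k), abs_nonneg (sin (π * Ω / 2))]

lemma abs_neg_add_mul_sin_le_half (hk : k ∈ Icc 1 3) {Ω : ℝ} (hΩ : Ω ∈ Icc (-(7/100)) 0) :
    |-(Ω + k) * sin (π * Ω / 2)| ≤ 1/2 := by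
  have : |Ω| ≤ 7/100 := abs_le.2 ⟨hΩ.1, by linarith [hΩ.2]⟩
  linarith [abs_neg_add_mul_sin_le hk hΩ]

lemma abs_arcsin_neg_add_mul_sin_add_le (hk : k ∈ Icc 1 3) {Ω : ℝ}
    (hΩ : Ω ∈ Icc (-(7/100)) 0) :
    |arcsin (-(Ω + k) * sin (π * Ω / 2)) + (k * π * Ω / 2 + π * Ω^2 / 2)| ≤ 44 * |Ω|^3 := by
  set P := π * Ω / 2
  set u := -(Ω + k) * sin P
  have hu : |u| ≤ 5 * |Ω| := abs_neg_add_mul_sin_le hk hΩ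
  have harcsin : |arcsin u - u| ≤ |u|^3 / 3 :=
    abs_arcsin_sub_self_le (abs_neg_add_mul_sin_le_half hk hΩ)
  have hsin : |P - sin P| ≤ |P|^3 / 6 := abs_sub_sin_le P
  have hΩk : |Ω + k| ≤ 3 := abs_le.2 ⟨by linarith [hk.1, hΩ.1], by linarith [hk.2, hΩ.2]⟩
  have hu3 : |u|^3 ≤ (5 * |Ω|)^3 := by gcongr
  have hP3 : |P|^3 ≤ (8/5 * |Ω|)^3 := by gcongr; exact abs_pi_mul_div_two_le Ω
  have hsplit : arcsin u + (k * π * Ω / 2 + π * Ω^2 / 2)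
      = (arcsin u - u) + (Ω + k) * (P - sin P) := by
    simp only [u, P]; ring
  rw [hsplit]
  calc |(arcsin u - u) + (Ω + k) * (P - sin P)| ≤ |arcsin u - u| + |Ω + k| * |P - sin P| := by
        rw [← abs_mul]; exact abs_add_le _ _
    _ ≤ |u|^3 / 3 + 3 * (|P|^3 / 6) := by gcongr
    _ ≤ 44 * |Ω|^3 := by nlinarith [pow_nonneg (abs_nonneg Ω) 3]

lemma abs_arcsin_neg_add_mul_sin_sub_le (hk : k ∈ Icc 1 3) {Ω₁ Ω₂ : ℝ}
    (h₁ : Ω₁ ∈ Icc (-(7/100)) 0) (h₂ : Ω₂ ∈ Icc (-(7/100)) 0) :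
    |arcsin (-(Ω₁ + k) * sin (π * Ω₁ / 2)) - arcsin (-(Ω₂ + k) * sin (π * Ω₂ / 2))|
      ≤ 10 * |Ω₁ - Ω₂| := by
  have hΩk : |Ω₂ + k| ≤ 3 := abs_le.2 ⟨by linarith [hk.1, h₂.1], by linarith [hk.2, h₂.2]⟩
  have hsin₁ : |sin (π * Ω₁ / 2)| ≤ 8/5 * (7/100) :=
    abs_sin_le_abs.trans <| (abs_pi_mul_div_two_le Ω₁).trans <| by
      gcongr; exact abs_le.2 ⟨h₁.1, by linarith [h₁.2]⟩
  have hsin : |sin (π * Ω₁ / 2) - sin (π * Ω₂ / 2)| ≤ 8/5 * |Ω₁ - Ω₂| := by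
    refine (abs_sin_sub_sin_le _ _).trans ?_
    rw [← sub_div, ← mul_sub]
    exact abs_pi_mul_div_two_le _
  have hsplit : -(Ω₁ + k) * sin (π * Ω₁ / 2) - -(Ω₂ + k) * sin (π * Ω₂ / 2)
      = -((Ω₁ - Ω₂) * sin (π * Ω₁ / 2)) - (Ω₂ + k) * (sin (π * Ω₁ / 2) - sin (π * Ω₂ / 2)) := by
    ring
  have hu : |-(Ω₁ + k) * sin (π * Ω₁ / 2) - -(Ω₂ + k) * sin (π * Ω₂ / 2)| ≤ 5 * |Ω₁ - Ω₂| := by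
    rw [hsplit]
    refine (abs_sub _ _).trans ?_
    rw [abs_neg, abs_mul, abs_mul]
    nlinarith [abs_nonneg (Ω₁ - Ω₂), abs_nonneg (Ω₂ + k),
      abs_nonneg (sin (π * Ω₁ / 2) - sin (π * Ω₂ / 2))]
  calc _ ≤ 2 * |-(Ω₁ + k) * sin (π * Ω₁ / 2) - -(Ω₂ + k) * sin (π * Ω₂ / 2)| :=
        abs_arcsin_sub_arcsin_le (abs_neg_add_mul_sin_le_half hk h₁)
          (abs_neg_add_mul_sin_le_half hk h₂)
    _ ≤ 10 * |Ω₁ - Ω₂| := by linarith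

end PhaseArgument

/-- `c = π a_{m,j}` is the offset of the hashing line and `s = ±1` orients the phase
`s (ω Ω - c + π)` of the branch. -/
structure IsHashingBranch (ω : ℝ → ℝ) (c s : ℝ) : Prop where
  sign : s = 1 ∨ s = -1
  sub_mem_Icc : ∀ Ω ∈ Ioc (-1) 0, ω Ω - c ∈ Icc (-(2 * π)) (-(π / 2))
  cos_eq : ∀ Ω, cos (ω Ω) = -sin (s * (ω Ω - c + π))
  abs_phase_sub_le : ∀ Ω ∈ Icc (-(7/100)) 0,
    |s * (ω Ω - c + π) - (π * Ω + π * Ω^2 / 2)| ≤ 44 * |Ω|^3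
  lipschitzOnWith : LipschitzOnWith 12 ω (Icc (-(7/100)) 0)

lemma pi_mul_div_two_mem_Icc {Ω : ℝ} (hΩ : Ω ∈ Ioc (-1) 0) : π * Ω / 2 ∈ Icc (-(π / 2)) 0 :=
  ⟨by nlinarith [hΩ.1, pi_pos], by nlinarith [hΩ.2, pi_pos]⟩

lemma isHashingBranch_omegaPlus : IsHashingBranch omegaPlus (3 * π / 2) 1 where
  sign := Or.inl rfl
  sub_mem_Icc Ω hΩ := by
    have := arccos_nonneg (-(Ω + 1) * sin (π * Ω / 2))
    have := arccos_le_pi (-(Ω + 1) * sin (π * Ω / 2))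
    have := pi_mul_div_two_mem_Icc hΩ
    constructor <;> (unfold omegaPlus; linarith [this.1, this.2])
  cos_eq Ω := by
    rw [one_mul, show omegaPlus Ω - 3 * π / 2 + π = omegaPlus Ω - π / 2 by ring,
      sin_sub_pi_div_two, neg_neg]
  abs_phase_sub_le Ω hΩ := by
    have hphase : 1 * (omegaPlus Ω - 3 * π / 2 + π) - (π * Ω + π * Ω^2 / 2)
        = -(arcsin (-(Ω + 1) * sin (π * Ω / 2)) + (1 * π * Ω / 2 + π * Ω^2 / 2)) := by
      rw [omegaPlus, arccos_eq_pi_div_two_sub_arcsin]; ring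
    rw [hphase, abs_neg]
    exact abs_arcsin_neg_add_mul_sin_add_le ⟨le_rfl, by norm_num⟩ hΩ
  lipschitzOnWith := by
    refine LipschitzOnWith.of_dist_le_mul fun Ω₁ h₁ Ω₂ h₂ => ?_
    have harcsin := abs_arcsin_neg_add_mul_sin_sub_le (k := 1) ⟨le_rfl, by norm_num⟩ h₁ h₂
    have hdiff : omegaPlus Ω₁ - omegaPlus Ω₂ = π * (Ω₁ - Ω₂) / 2
        - (arcsin (-(Ω₁ + 1) * sin (π * Ω₁ / 2)) - arcsin (-(Ω₂ + 1) * sin (π * Ω₂ / 2))) := by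
      simp only [omegaPlus, arccos_eq_pi_div_two_sub_arcsin]; ring
    rw [Real.dist_eq, Real.dist_eq, hdiff]
    refine (abs_sub _ _).trans ?_
    push_cast
    linarith [abs_pi_mul_div_two_le (Ω₁ - Ω₂), abs_nonneg (Ω₁ - Ω₂)]

lemma isHashingBranch_omegaMinus : IsHashingBranch omegaMinus (π / 2) (-1) where
  sign := Or.inr rfl
  sub_mem_Icc Ω hΩ := by
    have := arccos_nonneg (-(Ω + 3) * sin (π * Ω / 2))
    have := arccos_le_pi (-(Ω + 3) * sin (π * Ω / 2))
    have := pi_mul_div_two_mem_Icc hΩ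
    constructor <;> (unfold omegaMinus; linarith [this.1, this.2])
  cos_eq Ω := by
    rw [show -1 * (omegaMinus Ω - π / 2 + π) = -(omegaMinus Ω + π / 2) by ring,
      sin_neg, sin_add_pi_div_two, neg_neg]
  abs_phase_sub_le Ω hΩ := by
    have hphase : -1 * (omegaMinus Ω - π / 2 + π) - (π * Ω + π * Ω^2 / 2)
        = -(arcsin (-(Ω + 3) * sin (π * Ω / 2)) + (3 * π * Ω / 2 + π * Ω^2 / 2)) := by
      rw [omegaMinus, arccos_eq_pi_div_two_sub_arcsin]; ring
    rw [hphase, abs_neg]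
    exact abs_arcsin_neg_add_mul_sin_add_le ⟨by norm_num, le_rfl⟩ hΩ
  lipschitzOnWith := by
    refine LipschitzOnWith.of_dist_le_mul fun Ω₁ h₁ Ω₂ h₂ => ?_
    have harcsin := abs_arcsin_neg_add_mul_sin_sub_le (k := 3) ⟨by norm_num, le_rfl⟩ h₁ h₂
    have hdiff : omegaMinus Ω₁ - omegaMinus Ω₂ = π * (Ω₁ - Ω₂) / 2
        + (arcsin (-(Ω₁ + 3) * sin (π * Ω₁ / 2)) - arcsin (-(Ω₂ + 3) * sin (π * Ω₂ / 2))) := by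
      simp only [omegaMinus, arccos_eq_pi_div_two_sub_arcsin]; ring
    rw [Real.dist_eq, Real.dist_eq, hdiff]
    refine (abs_add_le _ _).trans ?_
    push_cast
    linarith [abs_pi_mul_div_two_le (Ω₁ - Ω₂), abs_nonneg (Ω₁ - Ω₂)]

lemma abs_sin_sq_sub_sq_le (x : ℝ) : |sin x ^ 2 - x ^ 2| ≤ |x| ^ 4 / 3 := by
  have hsum : |sin x + x| ≤ 2 * |x| := by linarith [abs_add_le (sin x) x, abs_sin_le_abs (x := x)]
  calc |sin x ^ 2 - x ^ 2| = |x - sin x| * |sin x + x| := by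
        rw [← abs_mul, ← abs_neg, show -(sin x ^ 2 - x ^ 2) = (x - sin x) * (sin x + x) by ring]
    _ ≤ |x| ^ 3 / 6 * (2 * |x|) := by gcongr; exact abs_sub_sin_le x
    _ = |x| ^ 4 / 3 := by ring

lemma abs_sin_sub_phase_le {Ω θ : ℝ} (hΩ : Ω ∈ Icc (-(7/100)) 0)
    (hθ : |θ - (π * Ω + π * Ω^2 / 2)| ≤ 44 * |Ω|^3) :
    |sin θ - (π * Ω + π * Ω^2 / 2)| ≤ 52 * |Ω|^3 := by
  have ha7 : |Ω| ≤ 7/100 := abs_le.2 ⟨hΩ.1, by linarith [hΩ.2]⟩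
  have hpi : π ≤ 315/100 := by linarith [pi_lt_d2]
  have hphase : |π * Ω + π * Ω^2 / 2| ≤ 16/5 * |Ω| := by
    have h : π * (1 + Ω / 2) ≤ 16/5 := by nlinarith [pi_pos, hΩ.2]
    rw [show π * Ω + π * Ω^2 / 2 = π * (1 + Ω / 2) * Ω by ring, abs_mul,
      abs_of_pos (show 0 < π * (1 + Ω / 2) by nlinarith [pi_pos, hΩ.1])]
    exact mul_le_mul_of_nonneg_right h (abs_nonneg Ω)
  have hθ_abs : |θ| ≤ 7/2 * |Ω| := by
    have := abs_sub_abs_le_abs_sub θ (π * Ω + π * Ω^2 / 2)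
    nlinarith [abs_nonneg Ω, pow_le_pow_left₀ (abs_nonneg Ω) ha7 2]
  have hsin : |θ - sin θ| ≤ 8 * |Ω|^3 := calc
    |θ - sin θ| ≤ |θ|^3 / 6 := abs_sub_sin_le θ
    _ ≤ (7/2 * |Ω|)^3 / 6 := by gcongr
    _ ≤ 8 * |Ω|^3 := by nlinarith [pow_nonneg (abs_nonneg Ω) 3]
  calc |sin θ - (π * Ω + π * Ω^2 / 2)| = |(θ - (π * Ω + π * Ω^2 / 2)) - (θ - sin θ)| := by
        ring_nf
    _ ≤ 44 * |Ω|^3 + 8 * |Ω|^3 := (abs_sub _ _).trans (add_le_add hθ hsin)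
    _ = 52 * |Ω|^3 := by ring

lemma abs_sin_sq_div_sin_sub_le {Ω θ : ℝ} (hΩ : Ω ∈ Icc (-(7/100)) 0)
    (hθ : |θ - (π * Ω + π * Ω^2 / 2)| ≤ 44 * |Ω|^3) :
    |sin (π * Ω / 2) ^ 2 / sin θ - (π * Ω / 4 - π * Ω^2 / 8)| ≤ 18 * |Ω|^3 := by
  have hSA := abs_sin_sub_phase_le hΩ hθ
  set a := |Ω| with ha
  have hΩa : Ω = -a := by rw [ha, abs_of_nonpos hΩ.2]; ring
  have ha0 : 0 ≤ a := abs_nonneg Ω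
  have ha7 : a ≤ 7/100 := by linarith [hΩ.1]
  rcases ha0.eq_or_lt with ha0 | ha0
  · simp [hΩa, ← ha0]
  have hpi := pi_gt_d2
  have hpi' := pi_lt_d2
  set A := π * Ω + π * Ω^2 / 2
  set P := π * Ω / 2
  set T := π * Ω / 4 - π * Ω^2 / 8
  have hπa2 : π * a^2 ≤ 63/200 * a := by
    nlinarith [mul_le_mul_of_nonneg_left ha7 (mul_nonneg pi_pos.le ha0.le)]
  have hS : sin θ ≤ -(27/10) * a := by
    have hA : A ≤ -(303/100) * a := by simp only [A, hΩa]; nlinarith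
    have ha3 : a^3 ≤ 49/10000 * a := calc
      a^3 = a^2 * a := by ring
      _ ≤ 49/10000 * a := by gcongr; nlinarith
    linarith [(abs_le.1 hSA).2]
  have hNP : |sin P ^ 2 - P^2| ≤ 3 * a^4 := calc
    _ ≤ |P| ^ 4 / 3 := abs_sin_sq_sub_sq_le P
    _ ≤ (8/5 * a) ^ 4 / 3 := by gcongr; exact abs_pi_mul_div_two_le Ω
    _ ≤ 3 * a^4 := by nlinarith [pow_nonneg ha0.le 4]
  have hT : |T| ≤ 41/50 * a := abs_le.2 ⟨by simp only [T, hΩa]; nlinarith,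
    by simp only [T, hΩa]; nlinarith⟩
  have hπ4 : |π^2 * Ω^4 / 16| ≤ 7/10 * a^4 := by
    have hpi2 : π^2 ≤ 10 := by nlinarith
    rw [abs_of_nonneg (by positivity), hΩa, show (-a)^4 = a^4 by ring]
    nlinarith [mul_le_mul_of_nonneg_right hpi2 (pow_nonneg ha0.le 4)]
  have hnum : |sin P ^ 2 - T * sin θ| ≤ 47 * a^4 := calc
    _ = |π^2 * Ω^4 / 16 + (sin P ^ 2 - P^2) - T * (sin θ - A)| := by
      congr 1; simp only [P, T, A]; ring
    _ ≤ |π^2 * Ω^4 / 16| + |sin P ^ 2 - P^2| + |T| * |sin θ - A| := by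
      rw [← abs_mul]; exact (abs_sub _ _).trans (by gcongr; exact abs_add_le _ _)
    _ ≤ 7/10 * a^4 + 3 * a^4 + (41/50 * a) * (52 * a^3) := by gcongr
    _ ≤ 47 * a^4 := by nlinarith [pow_nonneg ha0.le 4]
  have hS0 : sin θ ≠ 0 := (by linarith : sin θ < 0).ne
  rw [show sin P ^ 2 / sin θ - T = (sin P ^ 2 - T * sin θ) / sin θ by field_simp, abs_div,
    div_le_iff₀ (by positivity), abs_of_neg (show sin θ < 0 by linarith)]
  nlinarith [pow_nonneg ha0.le 3]

lemma abs_add_pi_mul_add_le {s ε Ω θ : ℝ} (hs : s = 1 ∨ s = -1) (hε : ε ∈ Ioo 0 (1/100))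
    (hΩ : |Ω| ≤ 63/10 * ε) (hfix : Ω = ε * (s * θ - π))
    (hθ : |θ - (π * Ω + π * Ω^2 / 2)| ≤ 44 * |Ω|^3) :
    |Ω + π * ε + s * π^2 * ε^2| ≤ 250 * ε^3 := by
  obtain ⟨hε0, hε1⟩ := hε
  have hpi : π ≤ 315/100 := by linarith [pi_lt_d2]
  have hs_abs : |s| = 1 := by rcases hs with rfl | rfl <;> norm_num
  set R := θ - (π * Ω + π * Ω^2 / 2)
  have hπΩ2 : |π * Ω^2 / 2| ≤ 315/100 * (63/10 * ε)^2 / 2 := by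
    rw [abs_div, abs_mul, abs_pow, abs_of_pos pi_pos, abs_two]; gcongr
  have hR : |R| ≤ 44 * (63/10 * ε)^3 := hθ.trans (by gcongr)
  -- `Ω + πε = εsθ` is `O(ε²)`, and feeding this back into `θ ≈ πΩ` gives the next order
  have hθ_abs : |θ| ≤ 22 * ε := calc
    |θ| = |π * Ω + π * Ω^2 / 2 + R| := by rw [add_sub_cancel]
    _ ≤ |π * Ω| + |π * Ω^2 / 2| + |R| :=
      (abs_add_le _ _).trans (add_le_add_left (abs_add_le _ _) _)
    _ ≤ 315/100 * (63/10 * ε) + 315/100 * (63/10 * ε)^2 / 2 + 44 * (63/10 * ε)^3 := by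
      gcongr; rw [abs_mul, abs_of_pos pi_pos]; gcongr
    _ ≤ 22 * ε := by nlinarith [mul_pos hε0 hε0, mul_pos (mul_pos hε0 hε0) hε0]
  have hfirst : |Ω + π * ε| ≤ 22 * ε^2 := by
    rw [show Ω + π * ε = ε * s * θ by linear_combination hfix, abs_mul, abs_mul, hs_abs,
      abs_of_pos hε0]
    nlinarith
  calc |Ω + π * ε + s * π^2 * ε^2| = ε * |π * (Ω + π * ε) + π * Ω^2 / 2 + R| := by
        rw [show Ω + π * ε + s * π^2 * ε^2 = ε * s * (π * (Ω + π * ε) + π * Ω^2 / 2 + R) by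
          linear_combination hfix, abs_mul, abs_mul, hs_abs, abs_of_pos hε0, mul_one]
    _ ≤ ε * (|π * (Ω + π * ε)| + |π * Ω^2 / 2| + |R|) := by
      gcongr; exact (abs_add_le _ _).trans (add_le_add_left (abs_add_le _ _) _)
    _ ≤ ε * (315/100 * (22 * ε^2) + 315/100 * (63/10 * ε)^2 / 2 + 44 * (63/10 * ε)^3) := by
      gcongr; rw [abs_mul, abs_of_pos pi_pos]; gcongr
    _ ≤ 250 * ε^3 := by nlinarith [mul_pos hε0 hε0, mul_pos (mul_pos hε0 hε0) hε0]

lemma abs_pi_mul_div_four_sub_le {s ε Ω : ℝ} (hs : s = 1 ∨ s = -1) (hε : ε ∈ Ioo 0 (1/100))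
    (hΩ : |Ω| ≤ 63/10 * ε) (h : |Ω + π * ε + s * π^2 * ε^2| ≤ 250 * ε^3) :
    |(π * Ω / 4 - π * Ω^2 / 8) - (-(π/2)^2 * ε - (2 * s + 1) * (π/2)^3 * ε^2)|
      ≤ 250 * ε^3 := by
  obtain ⟨hε0, hε1⟩ := hε
  have hpi : π ≤ 315/100 := by linarith [pi_lt_d2]
  have hs_abs : |s| = 1 := by rcases hs with rfl | rfl <;> norm_num
  have hsπ : |s * π^2 * ε^2| ≤ 10 * ε^2 := by
    rw [abs_mul, abs_mul, hs_abs, one_mul, abs_of_pos (by positivity), abs_of_pos (by positivity)]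
    have : π^2 ≤ 10 := by nlinarith [pi_pos]
    nlinarith
  have hplus : |Ω + π * ε| ≤ 13 * ε^2 := by
    have := abs_sub (Ω + π * ε + s * π^2 * ε^2) (s * π^2 * ε^2)
    rw [add_sub_cancel_right] at this
    nlinarith
  have hminus : |Ω - π * ε| ≤ 10 * ε := by
    have := abs_sub Ω (π * ε)
    rw [abs_mul, abs_of_pos pi_pos, abs_of_pos hε0] at this
    nlinarith
  have hsq : |Ω^2 - π^2 * ε^2| ≤ 130 * ε^3 := by
    rw [show Ω^2 - π^2 * ε^2 = (Ω + π * ε) * (Ω - π * ε) by ring, abs_mul]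
    calc _ ≤ 13 * ε^2 * (10 * ε) := by gcongr
      _ = 130 * ε^3 := by ring
  rw [show (π * Ω / 4 - π * Ω^2 / 8) - (-(π/2)^2 * ε - (2 * s + 1) * (π/2)^3 * ε^2)
    = π / 4 * (Ω + π * ε + s * π^2 * ε^2) - π / 8 * (Ω^2 - π^2 * ε^2) by ring]
  refine (abs_sub _ _).trans ?_
  rw [abs_mul, abs_mul, abs_of_pos (by positivity : (0:ℝ) < π / 4),
    abs_of_pos (by positivity : (0:ℝ) < π / 8)]
  nlinarith [abs_nonneg (Ω + π * ε + s * π^2 * ε^2), abs_nonneg (Ω^2 - π^2 * ε^2)]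

lemma isLittleO_sq_of_abs_le_mul_cube {F : ℝ → ℝ} {δ C : ℝ} (hδ : 0 < δ)
    (h : ∀ ε ∈ Ioo 0 δ, |F ε| ≤ C * ε^3) : F =o[𝓝[>] 0] (· ^ 2) := by
  have hbig : F =O[𝓝[>] 0] (· ^ 3) := IsBigO.of_bound C <| by
    filter_upwards [Ioo_mem_nhdsGT hδ] with ε hε
    simpa only [Real.norm_eq_abs, abs_of_pos (pow_pos hε.1 3)] using h ε hε
  exact hbig.trans_isLittleO ((isLittleO_pow_pow (by norm_num)).mono nhdsWithin_le_nhds)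

lemma eventually_lt_and_lt_zero {f g : ℝ → ℝ} {a b : ℝ} (ha : 0 < a) (hb : 0 < b)
    (hf : (fun ε => f ε - (-a * ε - 3 * b * ε^2)) =o[𝓝[>] 0] (· ^ 2))
    (hg : (fun ε => g ε - (-a * ε + b * ε^2)) =o[𝓝[>] 0] (· ^ 2)) :
    ∀ᶠ ε in 𝓝[>] 0, f ε < g ε ∧ g ε < 0 := by
  filter_upwards [hf.bound hb, hg.bound hb, Ioo_mem_nhdsGT (div_pos ha (mul_pos two_pos hb))]
    with ε hfε hgε hε
  simp only [Real.norm_eq_abs, abs_pow, sq_abs] at hfε hgε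
  have hf' := abs_le.1 hfε
  have hg' := abs_le.1 hgε
  have hε2 : 0 < ε^2 := pow_pos hε.1 2
  have hsmall : 2 * b * ε < a := by
    have := hε.2; rw [lt_div_iff₀ (by positivity)] at this; linarith
  constructor
  · nlinarith
  · nlinarith [mul_lt_mul_of_pos_right hsmall hε.1]

def IsHashingSolution (ω : ℝ → ℝ) (c ε Ω : ℝ) : Prop :=
  Ω ∈ Ioc (-1) 0 ∧ Ω = ε * (ω Ω - c)

open Classical in
noncomputable def hashingSolution (ω : ℝ → ℝ) (c ε : ℝ) : ℝ :=
  if h : ∃ Ω, IsHashingSolution ω c ε Ω then h.choose else 0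

namespace IsHashingBranch

variable {ω : ℝ → ℝ} {c s ε Ω : ℝ}

lemma mem_Icc_of_isHashingSolution (hω : IsHashingBranch ω c s) (hε : 0 < ε)
    (hΩ : IsHashingSolution ω c ε Ω) : Ω ∈ Icc (-(2 * π * ε)) (-(π / 2 * ε)) := by
  obtain ⟨h₁, h₂⟩ := hω.sub_mem_Icc Ω hΩ.1
  rw [hΩ.2]
  constructor <;> nlinarith

lemma mem_Icc_small_of_isHashingSolution (hω : IsHashingBranch ω c s) (hε : ε ∈ Ioo 0 (1/100))
    (hΩ : IsHashingSolution ω c ε Ω) : Ω ∈ Icc (-(7/100)) 0 := by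
  obtain ⟨h₁, h₂⟩ := hω.mem_Icc_of_isHashingSolution hε.1 hΩ
  constructor <;> nlinarith [pi_lt_d2, pi_pos, hε.1, hε.2]

lemma exists_isHashingSolution (hω : IsHashingBranch ω c s) (hε : ε ∈ Ioo 0 (1/100)) :
    ∃ Ω, IsHashingSolution ω c ε Ω := by
  have hπε : 2 * π * ε ≤ 7/100 := by nlinarith [mul_lt_mul_of_pos_right pi_lt_d2 hε.1, hε.2]
  have hle : -(2 * π * ε) ≤ 0 := by nlinarith [pi_pos, hε.1]
  have hcont : ContinuousOn (fun Ω => Ω - ε * (ω Ω - c)) (Icc (-(2 * π * ε)) 0) :=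
    (continuousOn_id.sub (continuousOn_const.mul
      (hω.lipschitzOnWith.continuousOn.sub continuousOn_const))).mono
      (Icc_subset_Icc (by linarith) le_rfl)
  have hleft : -(2 * π * ε) ∈ Ioc (-1) 0 := ⟨by linarith, hle⟩
  have h₁ := (hω.sub_mem_Icc _ hleft).1
  have h₂ := (hω.sub_mem_Icc 0 ⟨by norm_num, le_rfl⟩).2
  obtain ⟨Ω, hΩ, hroot⟩ := intermediate_value_Icc hle hcont
    (show (0 : ℝ) ∈ Icc _ _ from ⟨by nlinarith [hε.1], by nlinarith [hε.1, pi_pos]⟩)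
  exact ⟨Ω, ⟨by linarith [hΩ.1], hΩ.2⟩, by linarith [hroot]⟩

lemma isHashingSolution_unique (hω : IsHashingBranch ω c s) (hε : ε ∈ Ioo 0 (1/100))
    {Ω₁ Ω₂ : ℝ} (h₁ : IsHashingSolution ω c ε Ω₁) (h₂ : IsHashingSolution ω c ε Ω₂) :
    Ω₁ = Ω₂ := by
  have hlip := hω.lipschitzOnWith.dist_le_mul _ (hω.mem_Icc_small_of_isHashingSolution hε h₁)
    _ (hω.mem_Icc_small_of_isHashingSolution hε h₂)
  simp only [Real.dist_eq, NNReal.coe_ofNat] at hlip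
  have hdiff : Ω₁ - Ω₂ = ε * (ω Ω₁ - ω Ω₂) := by linear_combination h₁.2 - h₂.2
  -- the map `Ω ↦ ε (ω Ω - c)` is a contraction with constant `12 ε < 1`
  have hcontr : |Ω₁ - Ω₂| ≤ ε * (12 * |Ω₁ - Ω₂|) := calc
    |Ω₁ - Ω₂| = ε * |ω Ω₁ - ω Ω₂| := by rw [hdiff, abs_mul, abs_of_pos hε.1]
    _ ≤ ε * (12 * |Ω₁ - Ω₂|) := mul_le_mul_of_nonneg_left hlip hε.1.le
  have hzero : |Ω₁ - Ω₂| = 0 := by nlinarith [abs_nonneg (Ω₁ - Ω₂), hε.2]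
  exact sub_eq_zero.1 (abs_eq_zero.1 hzero)

lemma isHashingSolution_hashingSolution (hω : IsHashingBranch ω c s) (hε : ε ∈ Ioo 0 (1/100)) :
    IsHashingSolution ω c ε (hashingSolution ω c ε) := by
  have h := hω.exists_isHashingSolution hε
  rw [hashingSolution, dif_pos h]
  exact h.choose_spec

lemma lipschitzOnWith_hashingSolution (hω : IsHashingBranch ω c s) :
    LipschitzOnWith 8 (hashingSolution ω c) (Ioo 0 (1/100)) := by
  refine LipschitzOnWith.of_dist_le_mul fun ε₁ h₁ ε₂ h₂ => ?_
  set Ω₁ := hashingSolution ω c ε₁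
  set Ω₂ := hashingSolution ω c ε₂
  have hΩ₁ := hω.isHashingSolution_hashingSolution h₁
  have hΩ₂ := hω.isHashingSolution_hashingSolution h₂
  have hlip := hω.lipschitzOnWith.dist_le_mul _ (hω.mem_Icc_small_of_isHashingSolution h₁ hΩ₁)
    _ (hω.mem_Icc_small_of_isHashingSolution h₂ hΩ₂)
  simp only [Real.dist_eq, NNReal.coe_ofNat] at hlip ⊢
  have hrange : |ω Ω₁ - c| ≤ 2 * π := by
    obtain ⟨hl, hu⟩ := hω.sub_mem_Icc Ω₁ hΩ₁.1
    exact abs_le.2 ⟨hl, by linarith [pi_pos]⟩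
  have hdiff : Ω₁ - Ω₂ = (ε₁ - ε₂) * (ω Ω₁ - c) + ε₂ * (ω Ω₁ - ω Ω₂) := by
    linear_combination hΩ₁.2 - hΩ₂.2
  have hest : |Ω₁ - Ω₂| ≤ |ε₁ - ε₂| * (2 * π) + 1/100 * (12 * |Ω₁ - Ω₂|) := calc
    |Ω₁ - Ω₂| ≤ |ε₁ - ε₂| * |ω Ω₁ - c| + ε₂ * |ω Ω₁ - ω Ω₂| := by
      rw [hdiff, ← abs_mul, ← abs_of_pos h₂.1, ← abs_mul, abs_of_pos h₂.1]; exact abs_add_le _ _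
    _ ≤ |ε₁ - ε₂| * (2 * π) + 1/100 * (12 * |Ω₁ - Ω₂|) := by
      gcongr
      exact h₂.2.le
  nlinarith [pi_lt_d2, abs_nonneg (ε₁ - ε₂)]

lemma abs_Bval_hashingSolution_sub_le (hω : IsHashingBranch ω c s)
    (hε : ε ∈ Ioo 0 (1/100)) :
    |Bval ω (hashingSolution ω c ε) - (-(π/2)^2 * ε - (2 * s + 1) * (π/2)^3 * ε^2)|
      ≤ 5000 * ε^3 := by
  set Ω := hashingSolution ω c ε
  have hΩ := hω.isHashingSolution_hashingSolution hε
  have hsmall := hω.mem_Icc_small_of_isHashingSolution hε hΩ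
  have hΩε : |Ω| ≤ 63/10 * ε := by
    obtain ⟨h₁, h₂⟩ := hω.mem_Icc_of_isHashingSolution hε.1 hΩ
    exact abs_le.2 ⟨by nlinarith [pi_lt_d2, hε.1], by nlinarith [pi_pos, hε.1]⟩
  set θ := s * (ω Ω - c + π)
  have hθ := hω.abs_phase_sub_le Ω hsmall
  have hsq : s * s = 1 := by rcases hω.sign with h | h <;> rw [h] <;> norm_num
  have hfix : Ω = ε * (s * θ - π) := by
    rw [show s * θ - π = ω Ω - c by linear_combination (ω Ω - c + π) * hsq]
    exact hΩ.2
  have hB : Bval ω Ω = sin (π * Ω / 2) ^ 2 / sin θ := by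
    rw [Bval, hω.cos_eq, neg_div_neg_eq]
  have hpoly := abs_pi_mul_div_four_sub_le hω.sign hε hΩε
    (abs_add_pi_mul_add_le hω.sign hε hΩε hfix hθ)
  have hcube : |Ω|^3 ≤ (63/10 * ε)^3 := by gcongr
  calc _ ≤ |Bval ω Ω - (π * Ω / 4 - π * Ω^2 / 8)|
        + |(π * Ω / 4 - π * Ω^2 / 8) - (-(π/2)^2 * ε - (2 * s + 1) * (π/2)^3 * ε^2)| :=
        abs_sub_le _ _ _
    _ ≤ 18 * (63/10 * ε)^3 + 250 * ε^3 := by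
      rw [hB]; gcongr
      exact (abs_sin_sq_div_sin_sub_le hsmall hθ).trans (by gcongr)
    _ ≤ 5000 * ε^3 := by nlinarith [pow_pos hε.1 3]

lemma isLittleO_Bval_hashingSolution (hω : IsHashingBranch ω c s) :
    (fun ε => Bval ω (hashingSolution ω c ε) - (-(π/2)^2 * ε - (2 * s + 1) * (π/2)^3 * ε^2))
      =o[𝓝[>] 0] (· ^ 2) :=
  isLittleO_sq_of_abs_le_mul_cube (by norm_num) fun _ hε =>
    hω.abs_Bval_hashingSolution_sub_le hε

end IsHashingBranch

/-- Expansions of the Pyragas boundaries: unique continuous solutions `Ω⁺(ε)`, `Ω⁻(ε)` of the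
hashing relations `Ω = ε(ω⁺(Ω) - 3π/2)` resp. `Ω = ε(ω⁻(Ω) - π/2)` exist on `(0,ε₀)`, the
associated control values satisfy `B₀₁⁺(ε) = -(π/2)²ε - 3(π/2)³ε² + o(ε²)` and
`B₁₁⁻(ε) = -(π/2)²ε + (π/2)³ε² + o(ε²)`, and `B₀₁⁺(ε) < B₁₁⁻(ε) < 0` for small `ε > 0`. -/
theorem stmt_19 :
    ∃ ε₀ : ℝ, 0 < ε₀ ∧ ∃ fp fm : ℝ → ℝ,
      -- (i) existence, range and hashing relation for Ω⁺, with uniqueness among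
      -- continuous functions, and the ε-expansion of B₀₁⁺
      (ContinuousOn fp (Set.Ioo 0 ε₀) ∧
        (∀ ε ∈ Set.Ioo (0:ℝ) ε₀, fp ε ∈ Set.Ioc (-1:ℝ) 0 ∧
          fp ε = ε * (omegaPlus (fp ε) - 3*π/2)) ∧
        (∀ g : ℝ → ℝ, ContinuousOn g (Set.Ioo 0 ε₀) →
          (∀ ε ∈ Set.Ioo (0:ℝ) ε₀, g ε ∈ Set.Ioc (-1:ℝ) 0 ∧
            g ε = ε * (omegaPlus (g ε) - 3*π/2)) →
          ∀ ε ∈ Set.Ioo (0:ℝ) ε₀, g ε = fp ε) ∧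
        (fun ε => Bval omegaPlus (fp ε) - (-(π/2)^2*ε - 3*(π/2)^3*ε^2))
          =o[nhdsWithin 0 (Set.Ioi 0)] (fun ε => ε^2)) ∧
      -- (ii) existence, range and hashing relation for Ω⁻, with uniqueness among
      -- continuous functions, and the ε-expansion of B₁₁⁻
      (ContinuousOn fm (Set.Ioo 0 ε₀) ∧
        (∀ ε ∈ Set.Ioo (0:ℝ) ε₀, fm ε ∈ Set.Ioc (-1:ℝ) 0 ∧
          fm ε = ε * (omegaMinus (fm ε) - π/2)) ∧
        (∀ g : ℝ → ℝ, ContinuousOn g (Set.Ioo 0 ε₀) →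
          (∀ ε ∈ Set.Ioo (0:ℝ) ε₀, g ε ∈ Set.Ioc (-1:ℝ) 0 ∧
            g ε = ε * (omegaMinus (g ε) - π/2)) →
          ∀ ε ∈ Set.Ioo (0:ℝ) ε₀, g ε = fm ε) ∧
        (fun ε => Bval omegaMinus (fm ε) - (-(π/2)^2*ε + (π/2)^3*ε^2))
          =o[nhdsWithin 0 (Set.Ioi 0)] (fun ε => ε^2)) ∧
      -- In particular, the Pyragas interval is nonempty for all small ε > 0
      (∀ᶠ ε in nhdsWithin 0 (Set.Ioi 0),
        Bval omegaPlus (fp ε) < Bval omegaMinus (fm ε) ∧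
        Bval omegaMinus (fm ε) < 0) := by
  have hP := isHashingBranch_omegaPlus
  have hM := isHashingBranch_omegaMinus
  have hPo : (fun ε => Bval omegaPlus (hashingSolution omegaPlus (3 * π / 2) ε)
      - (-(π/2)^2 * ε - 3 * (π/2)^3 * ε^2)) =o[𝓝[>] 0] (· ^ 2) := by
    simpa only [mul_one, show (2 : ℝ) + 1 = 3 by norm_num] using
      hP.isLittleO_Bval_hashingSolution
  have hMo : (fun ε => Bval omegaMinus (hashingSolution omegaMinus (π / 2) ε)
      - (-(π/2)^2 * ε + (π/2)^3 * ε^2)) =o[𝓝[>] 0] (· ^ 2) := by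
    convert hM.isLittleO_Bval_hashingSolution using 3; ring
  refine ⟨1/100, by norm_num, hashingSolution omegaPlus (3 * π / 2),
    hashingSolution omegaMinus (π / 2),
    ⟨hP.lipschitzOnWith_hashingSolution.continuousOn,
      fun ε hε => hP.isHashingSolution_hashingSolution hε,
      fun g _ hg ε hε => hP.isHashingSolution_unique hε (hg ε hε)
        (hP.isHashingSolution_hashingSolution hε), hPo⟩,
    ⟨hM.lipschitzOnWith_hashingSolution.continuousOn,
      fun ε hε => hM.isHashingSolution_hashingSolution hε,
      fun g _ hg ε hε => hM.isHashingSolution_unique hε (hg ε hε)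
        (hM.isHashingSolution_hashingSolution hε), hMo⟩, ?_⟩
  exact eventually_lt_and_lt_zero (by positivity) (by positivity) hPo hMo
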